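/- Let H be a real Hilbert space, A : H → H a continuous self-adjoint nonnegative linear operator, and v : [0,∞) → H continuously differentiable with v'(t) = -A v(t), v(0) = u₀, and A^{1/2}u₀ ≠ 0. Assume the quotient |Av(t)|²/|A^{1/2}v(t)|² is nonincreasing in t (and A^{1/2}v(t) ≠ 0 for all t). Then |A^{1/2} v(t)|² ≥ |A^{1/2} u₀|² · exp( -2 t |A u₀|² / |A^{1/2} u₀|² ) for all t ≥ 0. -/

import Mathlib

open scoped RealInnerProductSpace

/-!
With `E t = ⟪A (v t), v t⟫ = ‖A^{1/2} v t‖²`, self-adjointness gives `E' = -2 ‖A v‖² = -2 P E`,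
where `P = ‖A v‖² / E` is the Rayleigh quotient. Since `P` is nonincreasing and `E > 0`,
`E' ≥ -2 P(0) E`, and Grönwall's inequality gives `E t ≥ E 0 * exp (-2 P(0) t)`.
-/

open Real Set

theorem mul_exp_le_of_neg_mul_le_deriv {f f' : ℝ → ℝ} {c : ℝ}
    (hf : ∀ t ≥ (0:ℝ), HasDerivAt f (f' t) t) (hf' : ∀ t ≥ (0:ℝ), -c * f t ≤ f' t) :
    ∀ t ≥ (0:ℝ), f 0 * exp (-c * t) ≤ f t := by
  intro t ht
  have hneg : ∀ s ∈ Ico 0 t, HasDerivWithinAt (-f) (-f' s) (Ici s) s :=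
    fun s hs => (hf s hs.1).neg.hasDerivWithinAt
  have hgronwall := le_gronwallBound_of_liminf_deriv_right_le (f := -f) (f' := -f')
    (δ := -f 0) (K := -c) (ε := 0) (a := 0) (b := t)
    (fun s hs => (hf s hs.1).continuousAt.neg.continuousWithinAt)
    (fun s hs r hr => by
      simpa [slope_def_field, div_eq_inv_mul] using (hneg s hs).liminf_right_slope_le hr)
    le_rfl (fun s hs => by simp only [Pi.neg_apply]; linarith [hf' s hs.1])
    t ⟨ht, le_rfl⟩
  rw [gronwallBound_ε0, sub_zero] at hgronwall
  simp only [Pi.neg_apply] at hgronwall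
  linarith

theorem LinearMap.IsSymmetric.hasDerivAt_inner_apply_self {H : Type*} [NormedAddCommGroup H]
    [InnerProductSpace ℝ H] {A : H →L[ℝ] H} (hA : (A : H →ₗ[ℝ] H).IsSymmetric)
    {v : ℝ → H} {v' : H} {t : ℝ} (hv : HasDerivAt v v' t) :
    HasDerivAt (fun s => ⟪A (v s), v s⟫) (2 * ⟪A (v t), v'⟫) t := by
  have hsymm : ⟪A v', v t⟫ = ⟪A (v t), v'⟫ := by
    rw [real_inner_comm]; exact (hA (v t) v').symm
  refine ((A.hasFDerivAt.comp_hasDerivAt t hv).inner ℝ hv).congr_deriv ?_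
  rw [Function.comp_apply, hsymm, two_mul]

theorem stmt_9_general {H : Type*} [NormedAddCommGroup H] [InnerProductSpace ℝ H]
    (A : H →L[ℝ] H)
    (hA_sa : ∀ x y : H, ⟪A x, y⟫ = ⟪x, A y⟫)
    (hA_nn : ∀ x : H, 0 ≤ ⟪A x, x⟫)
    (v : ℝ → H) (u₀ : H)
    (hv : ∀ t ≥ (0:ℝ), HasDerivAt v (-(A (v t))) t)
    (hv0 : v 0 = u₀)
    (hnz : ∀ t ≥ (0:ℝ), ⟪A (v t), v t⟫ ≠ 0)
    (hP : AntitoneOn (fun t => ‖A (v t)‖ ^ 2 / ⟪A (v t), v t⟫) (Set.Ici (0:ℝ))) :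
    ∀ t ≥ (0:ℝ),
      ⟪A (v t), v t⟫ ≥
        ⟪A u₀, u₀⟫ * Real.exp (-2 * t * ‖A u₀‖ ^ 2 / ⟪A u₀, u₀⟫) := by
  set E : ℝ → ℝ := fun t => ⟪A (v t), v t⟫
  have hE_pos : ∀ t ≥ (0:ℝ), 0 < E t := fun t ht => (hA_nn (v t)).lt_of_ne' (hnz t ht)
  have hE_deriv : ∀ t ≥ (0:ℝ), HasDerivAt E (-2 * ‖A (v t)‖ ^ 2) t := fun t ht =>
    (LinearMap.IsSymmetric.hasDerivAt_inner_apply_self hA_sa (hv t ht)).congr_deriv (by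
      rw [inner_neg_right, real_inner_self_eq_norm_sq]; ring)
  have hE_bound : ∀ t ≥ (0:ℝ), -(2 * (‖A u₀‖ ^ 2 / E 0)) * E t ≤ -2 * ‖A (v t)‖ ^ 2 := by
    intro t ht
    have hPt : ‖A (v t)‖ ^ 2 / E t ≤ ‖A u₀‖ ^ 2 / E 0 := by
      simpa [E, hv0] using hP self_mem_Ici (mem_Ici.mpr ht) ht
    rw [div_le_iff₀ (hE_pos t ht)] at hPt
    linarith
  intro t ht
  have h := mul_exp_le_of_neg_mul_le_deriv hE_deriv hE_bound t ht
  simp only [E, hv0] at h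
  convert h using 3
  ring

theorem stmt_9 {H : Type*} [NormedAddCommGroup H] [InnerProductSpace ℝ H] [CompleteSpace H]
    (A : H →L[ℝ] H)
    (hA_sa : ∀ x y : H, ⟪A x, y⟫ = ⟪x, A y⟫)
    (hA_nn : ∀ x : H, 0 ≤ ⟪A x, x⟫)
    (v : ℝ → H) (u₀ : H)
    (hv : ∀ t ≥ (0:ℝ), HasDerivAt v (-(A (v t))) t)
    (hv0 : v 0 = u₀)
    (hu₀ : ⟪A u₀, u₀⟫ ≠ 0)
    (hnz : ∀ t ≥ (0:ℝ), ⟪A (v t), v t⟫ ≠ 0)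
    (hP : AntitoneOn (fun t => ‖A (v t)‖ ^ 2 / ⟪A (v t), v t⟫) (Set.Ici (0:ℝ))) :
    ∀ t ≥ (0:ℝ),
      ⟪A (v t), v t⟫ ≥
        ⟪A u₀, u₀⟫ * Real.exp (-2 * t * ‖A u₀‖ ^ 2 / ⟪A u₀, u₀⟫) :=
  stmt_9_general A hA_sa hA_nn v u₀ hv hv0 hnz hP
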